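/- arXiv:math/0304467 — 4 statements merged into one kernel-verified Lean document; each statement's English description precedes it below -/
import Mathlib

section
/- For every finite simple graph G and every natural number t, if χℓ(G) > t then there exists a list assignment L on G such that |L(v)| ≥ t for every vertex v, the union ⋃_{v ∈ V(G)} L(v) has fewer than |V(G)| elements, and G admits no acceptable coloring from L. -/
/-!
Take lists `L` of size at least `t` from which `G` has no acceptable coloring. By Hall's
theorem some set `S` of vertices has fewer than `|S|` colors in its lists; choose such an `S`
of maximum size and let `C` be the colors of its lists. Maximality of `S` makes Hall's
condition hold for the lists `L v \ C` outside `S`, so any acceptable coloring of `G[S]` from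
`L` would extend to all of `G` by distinct new colors. Hence `G[S]` has no acceptable coloring
from `L`, and keeping `L` on `S` while giving every other vertex a `t`-subset of `C` yields bad
lists using only the `|C| < |S| ≤ |V|` colors of `C`.
-/

/-- An acceptable coloring of `G` from the list assignment `L`: a proper coloring
choosing each vertex's color from its list. -/
def IsAcceptable {V α : Type*} (G : SimpleGraph V) (L : V → Finset α) (f : V → α) : Prop :=
  (∀ v, f v ∈ L v) ∧ ∀ ⦃u v : V⦄, G.Adj u v → f u ≠ f v

/-- `G` is `k`-list-colorable: every list assignment with all lists of size at least `k`
admits an acceptable coloring. -/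
def ListColorable {V : Type*} (G : SimpleGraph V) (k : ℕ) : Prop :=
  ∀ L : V → Finset ℕ, (∀ v, k ≤ (L v).card) → ∃ f : V → ℕ, IsAcceptable G L f

/-- The list chromatic number of `G`. -/
noncomputable def listChromaticNumber {V : Type*} (G : SimpleGraph V) : ℕ :=
  sInf {k | ListColorable G k}

open Finset

section HallViolators

variable {V α : Type*} {G : SimpleGraph V} {L : V → Finset α}

theorem IsAcceptable.induce_of_eqOn {L' : V → Finset α} {f : V → α} {s : Set V}
    (hf : IsAcceptable G L' f) (hL : Set.EqOn L' L s) :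
    IsAcceptable (G.induce s) (fun v => L v) (fun v => f v) :=
  ⟨fun v => show f v ∈ L v from hL v.2 ▸ hf.1 v, fun _ _ huv => hf.2 huv⟩

variable [DecidableEq α]

theorem exists_card_biUnion_lt_card_of_not_exists_isAcceptable
    (h : ¬ ∃ f, IsAcceptable G L f) : ∃ s : Finset V, #(s.biUnion L) < #s := by
  by_contra! hall
  obtain ⟨f, hinj, hf⟩ := (all_card_le_biUnion_card_iff_exists_injective L).mp hall
  exact h ⟨f, hf, fun _ _ huv he => G.ne_of_adj huv (hinj he)⟩

variable {S : Finset V}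

theorem exists_injective_compl_of_maximal (hS : #(S.biUnion L) ≤ #S)
    (hmax : ∀ T : Finset V, #(T.biUnion L) < #T → #T ≤ #S) :
    ∃ r : {v // v ∉ S} → α,
      Function.Injective r ∧ ∀ v : {v // v ∉ S}, r v ∈ L v \ S.biUnion L := by
  classical
  refine (all_card_le_biUnion_card_iff_exists_injective _).mp fun s => ?_
  by_contra! hs
  set C := S.biUnion L
  set T := s.map (Function.Embedding.subtype _)
  have hdisj : Disjoint S T := by
    simp only [T, disjoint_right, mem_map, Function.Embedding.coe_subtype]
    rintro _ ⟨v, -, rfl⟩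
    exact v.2
  have hcolors : (S ∪ T).biUnion L ⊆ C ∪ s.biUnion fun v => L v \ C := by
    intro c hc
    simp only [T, C, mem_biUnion, mem_union, mem_map, Function.Embedding.coe_subtype,
      mem_sdiff] at hc ⊢
    grind
  have hST : #((S ∪ T).biUnion L) < #(S ∪ T) :=
    calc #((S ∪ T).biUnion L)
        ≤ #C + #(s.biUnion fun v => L v \ C) := (card_le_card hcolors).trans (card_union_le _ _)
      _ < #S + #s := by omega
      _ = #(S ∪ T) := by rw [card_union_of_disjoint hdisj, card_map]
  have hle := hmax _ hST
  rw [card_union_of_disjoint hdisj, card_map] at hle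
  omega

theorem exists_isAcceptable_of_maximal (hS : #(S.biUnion L) ≤ #S)
    (hmax : ∀ T : Finset V, #(T.biUnion L) < #T → #T ≤ #S) {g : ↥(S : Set V) → α}
    (hg : IsAcceptable (G.induce S) (fun v => L v) g) : ∃ f, IsAcceptable G L f := by
  classical
  obtain ⟨r, hinj, hr⟩ := exists_injective_compl_of_maximal hS hmax
  have hfresh (v : {v // v ∉ S}) {u} (hu : u ∈ S) : r v ≠ g ⟨u, hu⟩ := fun he =>
    (mem_sdiff.mp (hr v)).2 (mem_biUnion.mpr ⟨u, hu, he ▸ hg.1 ⟨u, hu⟩⟩)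
  refine ⟨fun v => if hv : v ∈ S then g ⟨v, hv⟩ else r ⟨v, hv⟩,
    fun v => ?_, fun u v huv => ?_⟩
  · by_cases hv : v ∈ S
    · simpa [hv] using hg.1 ⟨v, hv⟩
    · simpa [hv] using (mem_sdiff.mp (hr ⟨v, hv⟩)).1
  · by_cases hu : u ∈ S <;> by_cases hv : v ∈ S <;> simp only [hu, hv, ↓reduceDIte]
    · exact hg.2 (u := ⟨u, hu⟩) (v := ⟨v, hv⟩) huv
    · exact (hfresh _ hu).symm
    · exact hfresh _ hv
    · exact fun he => G.ne_of_adj huv (congrArg Subtype.val (hinj he))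

theorem card_biUnion_piecewise_le [Fintype V] [DecidablePred (· ∈ S)] {T : Finset α}
    (hT : T ⊆ S.biUnion L) : #(univ.biUnion (S.piecewise L fun _ => T)) ≤ #(S.biUnion L) := by
  refine card_le_card (biUnion_subset.mpr fun v _ => ?_)
  by_cases hv : v ∈ S
  · rw [piecewise_eq_of_mem _ _ _ hv]; exact subset_biUnion_of_mem L hv
  · rw [piecewise_eq_of_notMem _ _ _ hv]; exact hT

end HallViolators

theorem bad_lists_with_few_colors {V : Type} [Fintype V] (G : SimpleGraph V) (t : ℕ)
    (h : t < listChromaticNumber G) :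
    ∃ L : V → Finset ℕ,
      (∀ v, t ≤ (L v).card) ∧
      (Finset.univ.biUnion L).card < Fintype.card V ∧
      ¬ ∃ f : V → ℕ, IsAcceptable G L f := by
  classical
  obtain ⟨L, hL, hbad⟩ :
      ∃ L : V → Finset ℕ, (∀ v, t ≤ #(L v)) ∧ ¬ ∃ f, IsAcceptable G L f := by
    simpa [ListColorable] using Nat.notMem_of_lt_sInf h
  obtain ⟨S, hS, hmax⟩ := (univ.filter fun s : Finset V => #(s.biUnion L) < #s).exists_max_image
    card (by simpa [filter_nonempty_iff] using
      exists_card_biUnion_lt_card_of_not_exists_isAcceptable hbad)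
  rw [mem_filter] at hS
  have hSbad : ¬ ∃ g, IsAcceptable (G.induce (S : Set V)) (fun v => L v) g := fun ⟨_, hg⟩ =>
    hbad (exists_isAcceptable_of_maximal hS.2.le (fun T hT => hmax T (by simpa using hT)) hg)
  obtain ⟨v₀, hv₀⟩ : S.Nonempty := card_pos.mp (by omega)
  obtain ⟨T₀, hT₀, hT₀card⟩ :=
    exists_subset_card_eq ((hL v₀).trans (card_le_card (subset_biUnion_of_mem L hv₀)))
  refine ⟨S.piecewise L fun _ => T₀, fun v => ?_, ?_, fun ⟨f, hf⟩ =>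
    hSbad ⟨_, hf.induce_of_eqOn fun _ hv => piecewise_eq_of_mem _ _ _ hv⟩⟩
  · by_cases hv : v ∈ S <;> simp [hv, hL, hT₀card]
  · exact (card_biUnion_piecewise_le hT₀).trans_lt (hS.2.trans_le (card_le_univ S))
end

section
/- Let V′ be a finite set and for each v ∈ V′ let L′(v) be a nonempty finite set of colors. If there is no injective function f defined on V′ with f(v) ∈ L′(v) for every v ∈ V′, then there exists a subset X ⊆ V′ with ∑_{v ∈ X} 1/|L′(v)| > 1; in particular ∑_{v ∈ V′} 1/|L′(v)| > 1. -/
/-!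
By Hall's theorem, if there is no system of distinct representatives then some set `S` of
vertices has fewer than `|S|` colours in the union `N(S)` of its lists. Every list in `S` lies
in `N(S)`, so each vertex of `S` has weight at least `1 / |N(S)|`, and `W(S) ≥ |S| / |N(S)| > 1`.
-/

open Finset

theorem Finset.one_lt_sum_one_div_card_of_card_biUnion_lt {ι α : Type*} [DecidableEq α]
    {L : ι → Finset α} {S : Finset ι} (hL : ∀ v ∈ S, (L v).Nonempty)
    (hS : #(S.biUnion L) < #S) :
    1 < ∑ v ∈ S, (1 : ℝ) / #(L v) := by
  obtain ⟨v, hv⟩ := card_pos.mp (Nat.zero_lt_of_lt hS)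
  have hN : (0 : ℝ) < #(S.biUnion L) :=
    mod_cast ((hL v hv).mono (subset_biUnion_of_mem L hv)).card_pos
  have hterm : ∀ v ∈ S, (1 : ℝ) / #(S.biUnion L) ≤ 1 / #(L v) := fun v hv =>
    one_div_le_one_div_of_le (mod_cast (hL v hv).card_pos)
      (mod_cast card_le_card (subset_biUnion_of_mem L hv))
  calc (1 : ℝ) < #S / #(S.biUnion L) := by
        rw [one_lt_div hN]; exact_mod_cast hS
    _ = #S • ((1 : ℝ) / #(S.biUnion L)) := by rw [nsmul_eq_mul, mul_one_div]
    _ ≤ ∑ v ∈ S, (1 : ℝ) / #(L v) := card_nsmul_le_sum S _ _ hterm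

theorem hall_weight_observation {V α : Type*} [Fintype V] [DecidableEq α]
    (L : V → Finset α) (hL : ∀ v, (L v).Nonempty)
    (h : ¬ ∃ f : V → α, Function.Injective f ∧ ∀ v, f v ∈ L v) :
    (∃ X : Finset V, 1 < ∑ v ∈ X, (1 : ℝ) / (L v).card) ∧
      1 < ∑ v : V, (1 : ℝ) / (L v).card := by
  obtain ⟨S, hS⟩ : ∃ S : Finset V, #(S.biUnion L) < #S := by
    simpa [← all_card_le_biUnion_card_iff_exists_injective] using h
  have hW : 1 < ∑ v ∈ S, (1 : ℝ) / #(L v) :=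
    one_lt_sum_one_div_card_of_card_biUnion_lt (fun v _ => hL v) hS
  refine ⟨⟨S, hW⟩, hW.trans_le ?_⟩
  exact sum_le_sum_of_subset_of_nonneg (subset_univ S) fun _ _ _ => by positivity
end

section
/- Let δ be a real number with 0 < δ < 1 and let C be a positive integer. Let 𝒜 be a finite set of colors with |𝒜| < (2 − δ)·C and let 𝒞 ⊆ 𝒜 with |𝒞| = C. Let U be a finite set with 2 ≤ |U| < 80/δ², and for each v ∈ U let L(v) ⊆ 𝒜 be a set with |L(v)| = C. Suppose that for every color c ∈ 𝒞 there exists v ∈ U with c ∉ L(v). Then there exist two distinct elements u, v ∈ U with |L(u) ∖ 𝒞| > δ³·C/80 and |L(v) ∖ 𝒞| > δ³·C/80. -/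
/-!
If at most one vertex of `U` had a long reduced list, the reduced lists would be too short to
account for all the colours of `𝒞`: each colour of `𝒞` is missing from some `L v`, and since
`|L v| = |𝒞|`, the number of colours of `𝒞` missing from `L v` equals `|L v ∖ 𝒞|`. So the sizes
`|L v ∖ 𝒞|` sum to at least `C`. One of them is at most `|𝒜| - C < (1 - δ) C`, and all the others
are at most `δ³ C / 80`, which sum to less than `|U| δ³ C / 80 < δ C`.
-/

open Finset

namespace Finset

theorem card_le_sum_card_sdiff_of_forall_exists_notMem {α ι : Type*} [DecidableEq α]
    {s : Finset α} {U : Finset ι} {L : ι → Finset α} (hL : ∀ i ∈ U, #(L i) = #s)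
    (hmiss : ∀ c ∈ s, ∃ i ∈ U, c ∉ L i) :
    #s ≤ ∑ i ∈ U, #(L i \ s) := by
  have hcover : s ⊆ U.biUnion fun i => s \ L i := fun c hc => by
    obtain ⟨i, hi, hci⟩ := hmiss c hc
    exact mem_biUnion.2 ⟨i, hi, mem_sdiff.2 ⟨hc, hci⟩⟩
  calc #s ≤ #(U.biUnion fun i => s \ L i) := card_le_card hcover
    _ ≤ ∑ i ∈ U, #(s \ L i) := card_biUnion_le
    _ = ∑ i ∈ U, #(L i \ s) := sum_congr rfl fun i hi => card_sdiff_comm (hL i hi).symm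

theorem exists_ne_lt_lt_of_add_card_mul_lt_sum {ι R : Type*} [CommRing R] [LinearOrder R]
    [IsStrictOrderedRing R] {s : Finset ι} {f : ι → R} {M t : R} (hM : 0 ≤ M) (ht : 0 ≤ t)
    (hfM : ∀ i ∈ s, f i ≤ M) (hsum : M + #s * t < ∑ i ∈ s, f i) :
    ∃ i ∈ s, ∃ j ∈ s, i ≠ j ∧ t < f i ∧ t < f j := by
  by_contra! h
  have hlarge : #(s.filter (t < f ·)) ≤ 1 :=
    card_le_one.2 fun i hi j hj => by
      simp only [mem_filter] at hi hj
      by_contra hij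
      exact (h i hi.1 j hj.1 hij hi.2).not_gt hj.2
  have hsum_large : ∑ i ∈ s.filter (t < f ·), f i ≤ M :=
    calc ∑ i ∈ s.filter (t < f ·), f i ≤ #(s.filter (t < f ·)) • M :=
          sum_le_card_nsmul _ _ _ fun i hi => hfM i (mem_filter.1 hi).1
      _ ≤ 1 • M := nsmul_le_nsmul_left hM hlarge
      _ = M := one_nsmul M
  have hsum_small : ∑ i ∈ s.filter (¬t < f ·), f i ≤ #s * t :=
    calc ∑ i ∈ s.filter (¬t < f ·), f i ≤ #(s.filter (¬t < f ·)) • t :=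
          sum_le_card_nsmul _ _ _ fun i hi => not_lt.1 (mem_filter.1 hi).2
      _ ≤ #s • t := nsmul_le_nsmul_left ht (card_filter_le _ _)
      _ = #s * t := nsmul_eq_mul _ _
  rw [← sum_filter_add_sum_filter_not s (t < f ·)] at hsum
  exact hsum.not_ge (add_le_add hsum_large hsum_small)

end Finset

theorem small_part_two_long_reduced_lists_general (δ : ℝ) (hδ0 : 0 < δ)
    (C : ℕ) {α : Type*} [DecidableEq α]
    (A : Finset α) (hA : (A.card : ℝ) < (2 - δ) * C)
    (Cs : Finset α) (hCsA : Cs ⊆ A) (hCsC : Cs.card = C)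
    {V : Type*} (U : Finset V)
    (hU80 : (U.card : ℝ) < 80 / δ ^ 2)
    (L : V → Finset α) (hLA : ∀ v ∈ U, L v ⊆ A) (hLC : ∀ v ∈ U, (L v).card = C)
    (hmiss : ∀ c ∈ Cs, ∃ v ∈ U, c ∉ L v) :
    ∃ u ∈ U, ∃ v ∈ U, u ≠ v ∧
      δ ^ 3 * C / 80 < (((L u) \ Cs).card : ℝ) ∧
      δ ^ 3 * C / 80 < (((L v) \ Cs).card : ℝ) := by
  subst hCsC
  have hCA : (#Cs : ℝ) ≤ #A := mod_cast card_le_card hCsA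
  have hreduced_le : ∀ v ∈ U, (#(L v \ Cs) : ℝ) ≤ #A - #Cs := fun v hv => by
    rw [← Nat.cast_sub (card_le_card hCsA), ← card_sdiff_of_subset hCsA]
    exact mod_cast card_le_card (sdiff_subset_sdiff (hLA v hv) le_rfl)
  have hreduced_sum : (#Cs : ℝ) ≤ ∑ v ∈ U, (#(L v \ Cs) : ℝ) :=
    mod_cast card_le_sum_card_sdiff_of_forall_exists_notMem hLC hmiss
  have hU_mul : (#U : ℝ) * (δ ^ 3 * #Cs / 80) ≤ δ * #Cs :=
    calc (#U : ℝ) * (δ ^ 3 * #Cs / 80) ≤ 80 / δ ^ 2 * (δ ^ 3 * #Cs / 80) := by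
          gcongr
      _ = δ * #Cs := by field_simp
  exact exists_ne_lt_lt_of_add_card_mul_lt_sum (sub_nonneg.2 hCA) (by positivity) hreduced_le
    (by linarith)

theorem small_part_two_long_reduced_lists (δ : ℝ) (hδ0 : 0 < δ) (hδ1 : δ < 1)
    (C : ℕ) (hC : 0 < C) {α : Type*} [DecidableEq α]
    (A : Finset α) (hA : (A.card : ℝ) < (2 - δ) * C)
    (Cs : Finset α) (hCsA : Cs ⊆ A) (hCsC : Cs.card = C)
    {V : Type*} [DecidableEq V] (U : Finset V)
    (hU2 : 2 ≤ U.card) (hU80 : (U.card : ℝ) < 80 / δ ^ 2)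
    (L : V → Finset α) (hLA : ∀ v ∈ U, L v ⊆ A) (hLC : ∀ v ∈ U, (L v).card = C)
    (hmiss : ∀ c ∈ Cs, ∃ v ∈ U, c ∉ L v) :
    ∃ u ∈ U, ∃ v ∈ U, u ≠ v ∧
      δ ^ 3 * C / 80 < (((L u) \ Cs).card : ℝ) ∧
      δ ^ 3 * C / 80 < (((L v) \ Cs).card : ℝ) :=
  small_part_two_long_reduced_lists_general δ hδ0 C A hA Cs hCsA hCsC U hU80 L hLA hLC hmiss
end

section
/- Let k, C, S, m, t, n be positive integers with C = k·m, S = k·t, t ≤ m, and n ≤ C + S. Let G be a complete C-partite graph on n vertices and let L be a list assignment for G with |L(v)| = C for every vertex v. Suppose there is a set 𝒮 of S vertices of G, each forming a singleton part of G, partitioned into k sets 𝒮₁, …, 𝒮ₖ each of size t, and a set 𝒞 of C colors partitioned into k sets 𝒞₁, …, 𝒞ₖ each of size m, such that 𝒞ᵢ ⊆ L(s) for every vertex s ∈ 𝒮ᵢ. Then G admits an acceptable coloring from L. -/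
open Finset

lemma exists_constrained_equiv {k m t : ℕ} (htm : t ≤ m)
    (T : Fin k → Finset (Fin (k * m)))
    (hTdisj : ∀ a b, a ≠ b → Disjoint (T a) (T b))
    (hTcard : ∀ a, (T a).card = t) :
    ∃ π : Fin (k * m) ≃ (Fin k × Fin m), ∀ i, ∀ j ∈ T i, (π j).1 = i := by
  classical
  have huniq : ∀ {i i' : Fin k} {j}, j ∈ T i → j ∈ T i' → i = i' := by
    intro i i' j h h'
    by_contra hne
    exact Finset.disjoint_left.mp (hTdisj i i' hne) h h'
  set U : Finset (Fin (k * m)) := Finset.univ.biUnion T with hUdef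
  have hmemU : ∀ {j}, j ∈ U ↔ ∃ i, j ∈ T i := by
    intro j; simp [hUdef]
  have hUcard : U.card = k * t := by
    rw [hUdef, Finset.card_biUnion (fun a _ b _ hab => hTdisj a b hab)]
    simp [hTcard, mul_comm]
  have hRcard : Uᶜ.card = k * (m - t) := by
    rw [Finset.card_compl, hUcard, Fintype.card_fin, Nat.mul_sub]
  let eT : ∀ i, Fin t ≃o {x // x ∈ T i} := fun i => (T i).orderIsoOfFin (hTcard i)
  let eR : Fin (k * (m - t)) ≃o {x // x ∈ Uᶜ} := Uᶜ.orderIsoOfFin hRcard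
  let F : Fin (k * m) → Fin k × Fin m := fun j =>
    if h : j ∈ U then
      ((hmemU.mp h).choose,
        Fin.castLE htm ((eT (hmemU.mp h).choose).symm ⟨j, (hmemU.mp h).choose_spec⟩))
    else
      ((finProdFinEquiv.symm (eR.symm ⟨j, Finset.mem_compl.mpr h⟩)).1,
        ⟨t + ((finProdFinEquiv.symm (eR.symm ⟨j, Finset.mem_compl.mpr h⟩)).2 : Fin (m - t)),
          by have := ((finProdFinEquiv.symm (eR.symm ⟨j, Finset.mem_compl.mpr h⟩)).2).isLt; omega⟩)
  have hFT : ∀ (i) (j) (hj : j ∈ T i),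
      F j = (i, Fin.castLE htm ((eT i).symm ⟨j, hj⟩)) := by
    intro i j hj
    have hU' : j ∈ U := hmemU.mpr ⟨i, hj⟩
    have key : ∀ (i' : Fin k) (h' : j ∈ T i'), i' = i →
        ((i', Fin.castLE htm ((eT i').symm ⟨j, h'⟩)) : Fin k × Fin m)
          = (i, Fin.castLE htm ((eT i).symm ⟨j, hj⟩)) := by
      rintro i' h' rfl
      rfl
    have hch : (hmemU.mp hU').choose = i := huniq (hmemU.mp hU').choose_spec hj
    simp only [F, dif_pos hU']
    exact key _ _ hch
  have hlt : ∀ j, j ∈ U → ((F j).2 : ℕ) < t := by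
    intro j hj
    obtain ⟨i, hi⟩ := hmemU.mp hj
    rw [hFT i j hi]
    simp only [Fin.coe_castLE]
    exact ((eT i).symm ⟨j, hi⟩).isLt
  have hge : ∀ j (h : j ∉ U), t ≤ ((F j).2 : ℕ) := by
    intro j h
    simp only [F, dif_neg h]
    exact Nat.le_add_right _ _
  have hFinj : Function.Injective F := by
    intro a b hab
    by_cases ha : a ∈ U <;> by_cases hb : b ∈ U
    · obtain ⟨ia, hia⟩ := hmemU.mp ha
      obtain ⟨ib, hib⟩ := hmemU.mp hb
      rw [hFT ia a hia, hFT ib b hib] at hab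
      obtain ⟨h1, h2⟩ := Prod.ext_iff.mp hab
      simp only at h1 h2
      subst h1
      have h3 : (eT ia).symm ⟨a, hia⟩ = (eT ia).symm ⟨b, hib⟩ := by
        exact Fin.castLE_injective htm h2
      have := (eT ia).symm.injective h3
      exact Subtype.ext_iff.mp this
    · exact absurd (hab ▸ hlt a ha) (by have := hge b hb; omega)
    · exact absurd (hab ▸ hge a ha) (by have := hlt b hb; omega)
    · simp only [F, dif_neg ha, dif_neg hb] at hab
      obtain ⟨h1, h2⟩ := Prod.ext_iff.mp hab
      simp only at h1 h2
      have h2' : ((finProdFinEquiv.symm (eR.symm ⟨a, Finset.mem_compl.mpr ha⟩)).2 : Fin (m-t))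
          = (finProdFinEquiv.symm (eR.symm ⟨b, Finset.mem_compl.mpr hb⟩)).2 := by
        have hval := congrArg Fin.val h2
        simp only [] at hval
        exact Fin.ext (by omega)
      have hx : finProdFinEquiv.symm (eR.symm ⟨a, Finset.mem_compl.mpr ha⟩)
          = finProdFinEquiv.symm (eR.symm ⟨b, Finset.mem_compl.mpr hb⟩) := Prod.ext h1 h2'
      have := eR.symm.injective (finProdFinEquiv.symm.injective hx)
      exact Subtype.ext_iff.mp this
  have hbij : Function.Bijective F :=
    (Fintype.bijective_iff_injective_and_card F).mpr ⟨hFinj, by simp⟩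
  refine ⟨Equiv.ofBijective F hbij, ?_⟩
  intro i j hj
  show (F j).1 = i
  rw [hFT i j hj]

lemma exists_good_perm {k m t : ℕ} (hk : 0 < k) (hm : 0 < m) (htm : t ≤ m)
    (T : Fin k → Finset (Fin (k * m)))
    (hTdisj : ∀ a b, a ≠ b → Disjoint (T a) (T b))
    (hTcard : ∀ a, (T a).card = t)
    (g : Fin (k * m) → Fin k × Fin m → ℚ)
    (hg0 : ∀ j c, 0 ≤ g j c)
    (hgT : ∀ i, ∀ j ∈ T i, ∀ c, g j c = 0)
    (hgsum : ∑ j, ∑ c, g j c ≤ ((k * m : ℕ) : ℚ)) :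
    ∃ π : Fin (k * m) ≃ Fin k × Fin m,
      (∀ i, ∀ j ∈ T i, (π j).1 = i) ∧ ∑ j, g j (π j) ≤ 1 := by
  classical
  have huniq : ∀ {i i' : Fin k} {j}, j ∈ T i → j ∈ T i' → i = i' := by
    intro i i' j h h'
    by_contra hne
    exact Finset.disjoint_left.mp (hTdisj i i' hne) h h'
  obtain ⟨π₀, hπ₀⟩ := exists_constrained_equiv htm T hTdisj hTcard
  set P : Finset (Fin (k * m) ≃ Fin k × Fin m) :=
    Finset.univ.filter (fun π => ∀ i, ∀ j ∈ T i, (π j).1 = i) with hPdef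
  have hπ₀mem : π₀ ∈ P := by
    rw [hPdef, Finset.mem_filter]; exact ⟨Finset.mem_univ _, hπ₀⟩
  have hPne : P.Nonempty := ⟨π₀, hπ₀mem⟩
  -- fibers equal for same first component
  have fib1 : ∀ (j₀ : Fin (k * m)) (c c' : Fin k × Fin m), c.1 = c'.1 →
      (P.filter (fun π => π j₀ = c)).card = (P.filter (fun π => π j₀ = c')).card := by
    intro j₀ c c' h1
    have hswfst : ∀ x : Fin k × Fin m, ((Equiv.swap c c') x).1 = x.1 := by
      intro x
      rw [Equiv.swap_apply_def]
      split_ifs with h h'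
      · rw [h, h1]
      · rw [h', h1]
      · rfl
    have hmemP : ∀ π ∈ P, π.trans (Equiv.swap c c') ∈ P := by
      intro π hπ
      rw [hPdef, Finset.mem_filter] at hπ ⊢
      refine ⟨Finset.mem_univ _, fun i j hj => ?_⟩
      rw [Equiv.trans_apply, hswfst]
      exact hπ.2 i j hj
    have hinv : ∀ π : Fin (k * m) ≃ Fin k × Fin m,
        (π.trans (Equiv.swap c c')).trans (Equiv.swap c c') = π := by
      intro π
      refine Equiv.ext fun j => ?_
      simp [Equiv.swap_apply_self]
    have hi1 : ∀ π (hπ : π ∈ P.filter (fun π => π j₀ = c)),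
        π.trans (Equiv.swap c c') ∈ P.filter (fun π => π j₀ = c') := by
      intro π hπ
      rw [Finset.mem_filter] at hπ ⊢
      refine ⟨hmemP π hπ.1, ?_⟩
      rw [Equiv.trans_apply, hπ.2, Equiv.swap_apply_left]
    have hi2 : ∀ π (hπ : π ∈ P.filter (fun π => π j₀ = c')),
        π.trans (Equiv.swap c c') ∈ P.filter (fun π => π j₀ = c) := by
      intro π hπ
      rw [Finset.mem_filter] at hπ ⊢
      refine ⟨hmemP π hπ.1, ?_⟩
      rw [Equiv.trans_apply, hπ.2, Equiv.swap_apply_right]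
    exact Finset.card_bij' (fun π _ => π.trans (Equiv.swap c c'))
      (fun π _ => π.trans (Equiv.swap c c')) (fun π hπ => hi1 π hπ) (fun π hπ => hi2 π hπ)
      (fun π _ => hinv π) (fun π _ => hinv π)
  -- fibers equal across groups
  have fib2 : ∀ (j₀ : Fin (k * m)), (∀ i, j₀ ∉ T i) → ∀ (i₀ i₁ : Fin k) (r : Fin m), i₀ ≠ i₁ →
      (P.filter (fun π => π j₀ = (i₀, r))).card = (P.filter (fun π => π j₀ = (i₁, r))).card := by
    intro j₀ hj₀ i₀ i₁ r hne
    have hcardT : Fintype.card {x // x ∈ T i₀} = Fintype.card {x // x ∈ T i₁} := by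
      rw [Fintype.card_coe, Fintype.card_coe, hTcard, hTcard]
    let β := Fintype.equivOfCardEq hcardT
    set d : Fin (k * m) → Fin (k * m) := fun j =>
      if h : j ∈ T i₀ then (β ⟨j, h⟩ : {x // x ∈ T i₁}) else
      if h' : j ∈ T i₁ then (β.symm ⟨j, h'⟩ : {x // x ∈ T i₀}) else j with hddef
    have hd0 : ∀ j (h : j ∈ T i₀), d j = β ⟨j, h⟩ := fun j h => dif_pos h
    have hd1 : ∀ j (h : j ∉ T i₀) (h' : j ∈ T i₁), d j = β.symm ⟨j, h'⟩ := by
      intro j h h'; rw [hddef]; simp only [dif_neg h, dif_pos h']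
    have hd2 : ∀ j, j ∉ T i₀ → j ∉ T i₁ → d j = j := by
      intro j h h'; rw [hddef]; simp only [dif_neg h, dif_neg h']
    have hdisj01 : ∀ x, x ∈ T i₁ → x ∉ T i₀ :=
      fun x hx => fun hx0 => Finset.disjoint_left.mp (hTdisj i₀ i₁ hne) hx0 hx
    have hdinv : Function.Involutive d := by
      intro j
      by_cases h : j ∈ T i₀
      · rw [hd0 j h]
        have h1 : (β ⟨j, h⟩ : Fin (k * m)) ∈ T i₁ := (β ⟨j, h⟩).2
        have h0 : (β ⟨j, h⟩ : Fin (k * m)) ∉ T i₀ := hdisj01 _ h1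
        rw [hd1 _ h0 h1]
        have hs : (⟨(β ⟨j, h⟩ : Fin (k * m)), h1⟩ : {x // x ∈ T i₁}) = β ⟨j, h⟩ :=
          Subtype.ext rfl
        rw [hs, Equiv.symm_apply_apply]
      · by_cases h' : j ∈ T i₁
        · rw [hd1 j h h']
          have h1 : (β.symm ⟨j, h'⟩ : Fin (k * m)) ∈ T i₀ := (β.symm ⟨j, h'⟩).2
          rw [hd0 _ h1]
          have hs : (⟨(β.symm ⟨j, h'⟩ : Fin (k * m)), h1⟩ : {x // x ∈ T i₀}) = β.symm ⟨j, h'⟩ :=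
            Subtype.ext rfl
          rw [hs, Equiv.apply_symm_apply]
        · rw [hd2 j h h', hd2 j h h']
    let δ : Equiv.Perm (Fin (k * m)) := hdinv.toPerm
    have hδ : ∀ j, δ j = d j := fun j => rfl
    let γ : Equiv.Perm (Fin k × Fin m) := (Equiv.swap i₀ i₁).prodCongr (Equiv.refl (Fin m))
    have hγ : ∀ x : Fin k × Fin m, γ x = (Equiv.swap i₀ i₁ x.1, x.2) := fun x => rfl
    have hγγ : ∀ x, γ (γ x) = x := by
      intro x; rw [hγ, hγ]; simp [Equiv.swap_apply_self]
    set Φ : (Fin (k * m) ≃ Fin k × Fin m) → (Fin (k * m) ≃ Fin k × Fin m) :=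
      fun π => (δ.trans π).trans γ with hΦdef
    have hΦapp : ∀ π j, Φ π j = γ (π (d j)) := fun π j => rfl
    have hΦmemP : ∀ π ∈ P, Φ π ∈ P := by
      intro π hπ
      rw [hPdef, Finset.mem_filter] at hπ ⊢
      refine ⟨Finset.mem_univ _, fun h j hj => ?_⟩
      rw [hΦapp]
      by_cases hh0 : h = i₀
      · subst hh0
        have h1 : d j ∈ T i₁ := by rw [hd0 j hj]; exact (β ⟨j, hj⟩).2
        have := hπ.2 i₁ _ h1
        rw [hγ]
        simp only [this]
        exact Equiv.swap_apply_right _ _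
      · by_cases hh1 : h = i₁
        · subst hh1
          have hj0 : j ∉ T i₀ := hdisj01 j hj
          have h1 : d j ∈ T i₀ := by rw [hd1 j hj0 hj]; exact (β.symm ⟨j, hj⟩).2
          have := hπ.2 i₀ _ h1
          rw [hγ]
          simp only [this]
          exact Equiv.swap_apply_left _ _
        · have hj0 : j ∉ T i₀ := fun hc => hh0 (huniq hj hc)
          have hj1 : j ∉ T i₁ := fun hc => hh1 (huniq hj hc)
          rw [hd2 j hj0 hj1]
          have := hπ.2 h j hj
          rw [hγ]
          simp only [this]
          exact Equiv.swap_apply_of_ne_of_ne hh0 hh1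
    have hΦΦ : ∀ π, Φ (Φ π) = π := by
      intro π
      refine Equiv.ext fun j => ?_
      rw [hΦapp, hΦapp, hdinv j, hγγ]
    have hdj₀ : d j₀ = j₀ := hd2 j₀ (hj₀ i₀) (hj₀ i₁)
    have hi1 : ∀ π (hπ : π ∈ P.filter (fun π => π j₀ = (i₀, r))),
        Φ π ∈ P.filter (fun π => π j₀ = (i₁, r)) := by
      intro π hπ
      rw [Finset.mem_filter] at hπ ⊢
      refine ⟨hΦmemP π hπ.1, ?_⟩
      rw [hΦapp, hdj₀, hπ.2, hγ]
      simp only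
      rw [Equiv.swap_apply_left]
    have hi2 : ∀ π (hπ : π ∈ P.filter (fun π => π j₀ = (i₁, r))),
        Φ π ∈ P.filter (fun π => π j₀ = (i₀, r)) := by
      intro π hπ
      rw [Finset.mem_filter] at hπ ⊢
      refine ⟨hΦmemP π hπ.1, ?_⟩
      rw [hΦapp, hdj₀, hπ.2, hγ]
      simp only
      rw [Equiv.swap_apply_right]
    exact Finset.card_bij' (fun π _ => Φ π) (fun π _ => Φ π)
      (fun π hπ => hi1 π hπ) (fun π hπ => hi2 π hπ)
      (fun π _ => hΦΦ π) (fun π _ => hΦΦ π)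
  -- uniform fibers
  have hfib : ∀ (j₀ : Fin (k * m)), (∀ i, j₀ ∉ T i) → ∀ c : Fin k × Fin m,
      (P.filter (fun π => π j₀ = c)).card * (k * m) = P.card := by
    intro j₀ hj₀ c
    obtain ⟨c1, c2⟩ := c
    have hall : ∀ c' : Fin k × Fin m,
        (P.filter (fun π => π j₀ = c')).card = (P.filter (fun π => π j₀ = (c1, c2))).card := by
      intro c'
      obtain ⟨c1', c2'⟩ := c'
      by_cases h1 : c1' = c1
      · exact fib1 j₀ (c1', c2') (c1, c2) h1
      · exact (fib2 j₀ hj₀ c1' c1 c2' h1).trans (fib1 j₀ (c1, c2') (c1, c2) rfl)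
    have h3 : P.card = ∑ b : Fin k × Fin m, (P.filter (fun π => π j₀ = b)).card :=
      Finset.card_eq_sum_card_fiberwise (fun x _ => Finset.mem_univ _)
    have h2 : ∑ b : Fin k × Fin m, (P.filter (fun π => π j₀ = b)).card
        = (Fintype.card (Fin k × Fin m)) * (P.filter (fun π => π j₀ = (c1, c2))).card := by
      rw [Finset.sum_congr rfl (fun c' _ => hall c'), Finset.sum_const, smul_eq_mul,
        Finset.card_univ]
    rw [h3, h2, Fintype.card_prod, Fintype.card_fin, Fintype.card_fin, mul_comm]
  -- averaging
  have hkmpos : (0 : ℚ) < ((k * m : ℕ) : ℚ) := by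
    have : 0 < k * m := Nat.mul_pos hk hm
    exact_mod_cast this
  have hkey : ∑ π ∈ P, ∑ j, g j (π j) ≤ (P.card : ℚ) := by
    have hmul : ((k * m : ℕ) : ℚ) * (∑ π ∈ P, ∑ j, g j (π j))
        ≤ ((k * m : ℕ) : ℚ) * (P.card : ℚ) := by
      have step1 : ((k * m : ℕ) : ℚ) * (∑ π ∈ P, ∑ j, g j (π j))
          = ∑ j, ((k * m : ℕ) : ℚ) * ∑ π ∈ P, g j (π j) := by
        rw [Finset.sum_comm, Finset.mul_sum]
      have step2 : ∀ j : Fin (k * m), ((k * m : ℕ) : ℚ) * ∑ π ∈ P, g j (π j)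
          ≤ (P.card : ℚ) * ∑ c, g j c := by
        intro j
        by_cases hjT : ∃ i, j ∈ T i
        · obtain ⟨i, hi⟩ := hjT
          simp [hgT i j hi]
        · push_neg at hjT
          have hsplit : ∑ π ∈ P, g j (π j)
              = ∑ c, ((P.filter (fun π => π j = c)).card : ℚ) * g j c := by
            rw [← Finset.sum_fiberwise_of_maps_to
              (g := fun π : Fin (k * m) ≃ Fin k × Fin m => π j) (t := Finset.univ)
              (fun x _ => Finset.mem_univ _) (fun π => g j (π j))]
            apply Finset.sum_congr rfl
            intro c _
            rw [Finset.sum_congr rfl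
              (fun π hπ => by rw [(Finset.mem_filter.mp hπ).2]),
              Finset.sum_const, nsmul_eq_mul]
          rw [hsplit, Finset.mul_sum, Finset.mul_sum]
          apply Finset.sum_le_sum
          intro c _
          have huni := hfib j hjT c
          refine le_of_eq ?_
          calc ((k * m : ℕ) : ℚ) * (((P.filter (fun π => π j = c)).card : ℚ) * g j c)
              = (((P.filter (fun π => π j = c)).card * (k * m) : ℕ) : ℚ) * g j c := by
                push_cast; ring
            _ = (P.card : ℚ) * g j c := by rw [huni]
      calc ((k * m : ℕ) : ℚ) * (∑ π ∈ P, ∑ j, g j (π j))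
          = ∑ j, ((k * m : ℕ) : ℚ) * ∑ π ∈ P, g j (π j) := step1
        _ ≤ ∑ j, (P.card : ℚ) * ∑ c, g j c := Finset.sum_le_sum (fun j _ => step2 j)
        _ = (P.card : ℚ) * ∑ j, ∑ c, g j c := by rw [Finset.mul_sum]
        _ ≤ (P.card : ℚ) * ((k * m : ℕ) : ℚ) :=
            mul_le_mul_of_nonneg_left hgsum (by positivity)
        _ = ((k * m : ℕ) : ℚ) * (P.card : ℚ) := mul_comm _ _
    exact le_of_mul_le_mul_left hmul hkmpos
  have hone : ∑ π ∈ P, ∑ j, g j (π j) ≤ ∑ π ∈ P, (1 : ℚ) := by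
    rw [Finset.sum_const, nsmul_eq_mul, mul_one]
    exact hkey
  obtain ⟨π, hπmem, hπle⟩ := Finset.exists_le_of_sum_le hPne hone
  rw [hPdef, Finset.mem_filter] at hπmem
  exact ⟨π, hπmem.2, hπle⟩

/-- `G` is a complete multipartite graph whose parts are the (nonempty) fibers of `p`:
two vertices are adjacent exactly when they lie in different parts. -/
def IsCompleteMultipartiteWith {V ι : Type*} (G : SimpleGraph V) (p : V → ι) : Prop :=
  Function.Surjective p ∧ ∀ u v, G.Adj u v ↔ p u ≠ p v

theorem expected_value_case {V : Type} [Fintype V] [DecidableEq V]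
    (k C S m t n : ℕ) (hk : 0 < k) (hC : 0 < C) (hS : 0 < S) (hm : 0 < m) (ht : 0 < t)
    (hn : 0 < n) (hCkm : C = k * m) (hSkt : S = k * t) (htm : t ≤ m) (hnCS : n ≤ C + S)
    (G : SimpleGraph V) (p : V → Fin C) (hG : IsCompleteMultipartiteWith G p)
    (hcard : Fintype.card V = n)
    (L : V → Finset ℕ) (hL : ∀ v, (L v).card = C)
    (SS : Fin k → Finset V)
    (hSSdisj : ∀ a b : Fin k, a ≠ b → Disjoint (SS a) (SS b))
    (hSScard : ∀ a, (SS a).card = t)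
    (hSSsingleton : ∀ a, ∀ v ∈ SS a, (Finset.univ.filter (fun w => p w = p v)).card = 1)
    (hSStotal : (Finset.univ.biUnion SS).card = S)
    (CC : Fin k → Finset ℕ)
    (hCCdisj : ∀ a b : Fin k, a ≠ b → Disjoint (CC a) (CC b))
    (hCCcard : ∀ a, (CC a).card = m)
    (hCCsub : ∀ a, ∀ s ∈ SS a, CC a ⊆ L s) :
    ∃ f : V → ℕ, IsAcceptable G L f := by
  classical
  subst hCkm
  subst hSkt
  obtain ⟨hpsurj, hadj⟩ := hG
  -- p is "injective" at designated singleton vertices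
  have hpuniq : ∀ {a : Fin k} {v}, v ∈ SS a → ∀ {u}, p u = p v → u = v := by
    intro a v hv u hu
    have h1 := hSSsingleton a v hv
    have hvmem : v ∈ Finset.univ.filter (fun w => p w = p v) := by simp
    have humem : u ∈ Finset.univ.filter (fun w => p w = p v) := by simp [hu]
    exact Finset.card_le_one.mp (le_of_eq h1) u humem v hvmem
  set Sset : Finset V := Finset.univ.biUnion SS with hSsetdef
  set nonS : Finset V := Ssetᶜ with hnonSdef
  have hnonScard : nonS.card ≤ k * m := by
    rw [hnonSdef, Finset.card_compl, hSStotal, hcard]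
    omega
  set T : Fin k → Finset (Fin (k * m)) := fun i => (SS i).image p with hTdef
  have hTcard : ∀ i, (T i).card = t := by
    intro i
    rw [hTdef]
    rw [Finset.card_image_of_injOn, hSScard]
    intro x hx y hy hxy
    exact hpuniq hy hxy
  have hTdisj : ∀ a b, a ≠ b → Disjoint (T a) (T b) := by
    intro a b hab
    rw [Finset.disjoint_left]
    intro x hxa hxb
    rw [hTdef] at hxa hxb
    simp only [Finset.mem_image] at hxa hxb
    obtain ⟨va, hva, hpva⟩ := hxa
    obtain ⟨vb, hvb, hpvb⟩ := hxb
    have : va = vb := hpuniq hvb (hpva.trans hpvb.symm)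
    exact Finset.disjoint_left.mp (hSSdisj a b hab) hva (this ▸ hvb)
  set Cfin : Finset ℕ := Finset.univ.biUnion CC with hCfindef
  have hCfincard : Cfin.card = k * m := by
    rw [hCfindef, Finset.card_biUnion (fun a _ b _ hab => hCCdisj a b hab)]
    simp [hCCcard, mul_comm]
  set col : Fin k × Fin m → ℕ := fun c => (CC c.1).orderEmbOfFin (hCCcard c.1) c.2 with hcoldef
  have hcolmem : ∀ c, col c ∈ CC c.1 := fun c => Finset.orderEmbOfFin_mem _ _ _
  have hcolC : ∀ c, col c ∈ Cfin := fun c =>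
    Finset.mem_biUnion.mpr ⟨c.1, Finset.mem_univ _, hcolmem c⟩
  have hcolinj : Function.Injective col := by
    rintro ⟨a1, a2⟩ ⟨b1, b2⟩ hab
    by_cases h1 : a1 = b1
    · subst h1
      have h2 := ((CC a1).orderEmbOfFin (hCCcard a1)).injective hab
      exact Prod.ext rfl h2
    · have hmem1 := hcolmem (a1, a2)
      have hmem2 := hcolmem (b1, b2)
      rw [hab] at hmem1
      exact absurd (Finset.disjoint_left.mp (hCCdisj a1 b1 h1) hmem1 hmem2) (fun h => h)
  have hlcard : ∀ v : V, (Cfin \ L v).card = (L v \ Cfin).card := by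
    intro v
    have h1 := Finset.card_sdiff_add_card_inter Cfin (L v)
    have h2 := Finset.card_sdiff_add_card_inter (L v) Cfin
    rw [Finset.inter_comm] at h2
    have h3 := hL v
    omega
  have hcount : ∀ v : V,
      (Finset.univ.filter (fun c : Fin k × Fin m => ¬ col c ∈ L v)).card
        = (Cfin \ L v).card := by
    intro v
    apply Finset.card_bij (fun c _ => col c)
    · intro c hc
      simp only [Finset.mem_filter, Finset.mem_univ, true_and] at hc
      exact Finset.mem_sdiff.mpr ⟨hcolC c, hc⟩
    · intro c hc c' hc' h
      exact hcolinj h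
    · intro x hx
      rw [Finset.mem_sdiff] at hx
      obtain ⟨hx1, hx2⟩ := hx
      rw [hCfindef] at hx1
      obtain ⟨i, _, hxi⟩ := Finset.mem_biUnion.mp hx1
      have : x ∈ (↑(CC i) : Set ℕ) := hxi
      rw [← Finset.range_orderEmbOfFin (CC i) (hCCcard i)] at this
      obtain ⟨r, hr⟩ := this
      refine ⟨(i, r), ?_, hr⟩
      simp only [Finset.mem_filter, Finset.mem_univ, true_and]
      rw [hcoldef]
      simp only
      rw [hr]
      exact hx2
  set w : V → ℚ := fun v => (((L v \ Cfin).card : ℚ))⁻¹ with hwdef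
  have hw0 : ∀ v, 0 ≤ w v := fun v => inv_nonneg.mpr (Nat.cast_nonneg _)
  set g : Fin (k * m) → Fin k × Fin m → ℚ := fun j c =>
    ∑ v ∈ nonS.filter (fun v => p v = j), (if col c ∈ L v then 0 else w v) with hgdef
  have hg0 : ∀ j c, 0 ≤ g j c := by
    intro j c
    apply Finset.sum_nonneg
    intro v _
    split_ifs
    · exact le_refl 0
    · exact hw0 v
  have hgT : ∀ i, ∀ j ∈ T i, ∀ c, g j c = 0 := by
    intro i j hj c
    rw [hgdef]
    simp only
    convert Finset.sum_empty
    rw [Finset.eq_empty_iff_forall_notMem]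
    intro v hv
    rw [Finset.mem_filter] at hv
    rw [hTdef] at hj
    obtain ⟨s, hs, hps⟩ := Finset.mem_image.mp hj
    have : v = s := hpuniq hs (hv.2.trans hps.symm)
    subst this
    have : v ∈ Sset := Finset.mem_biUnion.mpr ⟨i, Finset.mem_univ _, hs⟩
    exact (Finset.mem_compl.mp hv.1) this
  have hinner : ∀ v : V, ∑ c : Fin k × Fin m, (if col c ∈ L v then 0 else w v) ≤ (1 : ℚ) := by
    intro v
    rw [Finset.sum_ite, Finset.sum_const_zero, zero_add, Finset.sum_const, nsmul_eq_mul]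
    rw [hcount v, hlcard v]
    rcases Nat.eq_zero_or_pos ((L v \ Cfin).card) with h | h
    · rw [h]
      simp
    · rw [hwdef]
      simp only
      have hne0 : (((L v \ Cfin).card : ℚ)) ≠ 0 := by
        exact_mod_cast Nat.pos_iff_ne_zero.mp h
      rw [mul_inv_cancel₀ hne0]
  have hgsum : ∑ j, ∑ c, g j c ≤ ((k * m : ℕ) : ℚ) := by
    have h1 : ∀ j, ∑ c, g j c ≤ ((nonS.filter (fun v => p v = j)).card : ℚ) := by
      intro j
      rw [hgdef]
      simp only
      rw [Finset.sum_comm]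
      calc ∑ v ∈ nonS.filter (fun v => p v = j), ∑ c : Fin k × Fin m,
              (if col c ∈ L v then 0 else w v)
          ≤ ∑ v ∈ nonS.filter (fun v => p v = j), (1 : ℚ) :=
            Finset.sum_le_sum (fun v _ => hinner v)
        _ = _ := by rw [Finset.sum_const, nsmul_eq_mul, mul_one]
    calc ∑ j, ∑ c, g j c ≤ ∑ j, ((nonS.filter (fun v => p v = j)).card : ℚ) :=
          Finset.sum_le_sum (fun j _ => h1 j)
      _ = ((∑ j, (nonS.filter (fun v => p v = j)).card : ℕ) : ℚ) := by push_cast; ring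
      _ = ((nonS.card : ℕ) : ℚ) := by
          rw [← Finset.card_eq_sum_card_fiberwise (fun x _ => Finset.mem_univ (p x))]
      _ ≤ ((k * m : ℕ) : ℚ) := by exact_mod_cast hnonScard
  obtain ⟨π, hπT, hπZ⟩ := exists_good_perm hk hm htm T hTdisj hTcard g hg0 hgT hgsum
  set B : Finset V := nonS.filter (fun v => ¬ col (π (p v)) ∈ L v) with hBdef
  have hBsum : ∑ v ∈ B, w v ≤ 1 := by
    have hZeq : ∑ j, g j (π j) = ∑ v ∈ nonS, (if col (π (p v)) ∈ L v then 0 else w v) := by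
      rw [← Finset.sum_fiberwise_of_maps_to (g := p) (fun x _ => Finset.mem_univ (p x))
        (fun v => if col (π (p v)) ∈ L v then 0 else w v)]
      apply Finset.sum_congr rfl
      intro j _
      rw [hgdef]
      simp only
      apply Finset.sum_congr rfl
      intro v hv
      rw [(Finset.mem_filter.mp hv).2]
    rw [hZeq] at hπZ
    rw [Finset.sum_ite, Finset.sum_const_zero, zero_add] at hπZ
    exact hπZ
  have hB1 : ∀ v ∈ B, 1 ≤ (L v \ Cfin).card := by
    intro v hv
    obtain ⟨hv1, hv2⟩ := Finset.mem_filter.mp hv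
    have hmem : col (π (p v)) ∈ Cfin \ L v := Finset.mem_sdiff.mpr ⟨hcolC _, hv2⟩
    have hpos := Finset.card_pos.mpr ⟨_, hmem⟩
    have := hlcard v
    omega
  have hhall : ∀ (s : Finset {x // x ∈ B}),
      s.card ≤ (s.biUnion (fun v => L v.1 \ Cfin)).card := by
    intro s
    rcases Finset.eq_empty_or_nonempty s with rfl | hs
    · simp
    by_contra hcon
    push_neg at hcon
    have hlt : ∀ x ∈ s, (L x.1 \ Cfin).card < s.card := by
      intro x hx
      calc (L x.1 \ Cfin).card ≤ (s.biUnion (fun v => L v.1 \ Cfin)).card :=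
            Finset.card_le_card (Finset.subset_biUnion_of_mem (fun v => L v.1 \ Cfin) hx)
        _ < s.card := hcon
    have hcard2 : 2 ≤ s.card := by
      obtain ⟨x, hx⟩ := hs
      have h1 := hB1 x.1 x.2
      have h2 := hlt x hx
      omega
    have hq : (0 : ℚ) < ((s.card - 1 : ℕ) : ℚ) := by
      have : 1 ≤ s.card - 1 := by omega
      exact_mod_cast Nat.lt_of_lt_of_le Nat.zero_lt_one this
    have hsum2 : (s.card : ℚ) * ((s.card - 1 : ℕ) : ℚ)⁻¹ ≤ ∑ x ∈ s, w x.1 := by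
      have hper : ∀ x ∈ s, ((s.card - 1 : ℕ) : ℚ)⁻¹ ≤ w x.1 := by
        intro x hx
        rw [hwdef]
        simp only
        apply inv_anti₀
        · have := hB1 x.1 x.2
          exact_mod_cast Nat.lt_of_lt_of_le Nat.zero_lt_one this
        · have := hlt x hx
          have h3 : (L x.1 \ Cfin).card ≤ s.card - 1 := by omega
          exact_mod_cast h3
      calc (s.card : ℚ) * ((s.card - 1 : ℕ) : ℚ)⁻¹
          = ∑ _x ∈ s, ((s.card - 1 : ℕ) : ℚ)⁻¹ := by rw [Finset.sum_const, nsmul_eq_mul]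
        _ ≤ ∑ x ∈ s, w x.1 := Finset.sum_le_sum hper
    have hsum1 : ∑ x ∈ s, w x.1 ≤ 1 := by
      have himg : ∑ x ∈ s, w x.1 = ∑ v ∈ s.image Subtype.val, w v := by
        rw [Finset.sum_image (by intro x _ y _ h; exact Subtype.ext h)]
      rw [himg]
      calc ∑ v ∈ s.image Subtype.val, w v ≤ ∑ v ∈ B, w v := by
            apply Finset.sum_le_sum_of_subset_of_nonneg
            · intro v hv
              obtain ⟨x, _, rfl⟩ := Finset.mem_image.mp hv
              exact x.2
            · intro v _ _
              exact hw0 v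
        _ ≤ 1 := hBsum
    have hgt : (1 : ℚ) < (s.card : ℚ) * ((s.card - 1 : ℕ) : ℚ)⁻¹ := by
      rw [← div_eq_mul_inv, lt_div_iff₀ hq, one_mul]
      exact_mod_cast Nat.sub_lt (by omega) Nat.zero_lt_one
    linarith
  obtain ⟨Frep, hFinj, hFmem⟩ :=
    (Finset.all_card_le_biUnion_card_iff_exists_injective
      (fun v : {x // x ∈ B} => L v.1 \ Cfin)).mp hhall
  refine ⟨fun v => if h : v ∈ B then Frep ⟨v, h⟩ else col (π (p v)), ?_, ?_⟩
  · intro v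
    by_cases h : v ∈ B
    · simp only [dif_pos h]
      exact (Finset.mem_sdiff.mp (hFmem ⟨v, h⟩)).1
    · simp only [dif_neg h]
      by_cases hv : v ∈ Sset
      · rw [hSsetdef] at hv
        obtain ⟨i, _, hvi⟩ := Finset.mem_biUnion.mp hv
        have hpT : p v ∈ T i := by
          rw [hTdef]
          exact Finset.mem_image_of_mem p hvi
        have h1 : (π (p v)).1 = i := hπT i _ hpT
        exact hCCsub i v hvi (h1 ▸ hcolmem (π (p v)))
      · have hvnonS : v ∈ nonS := Finset.mem_compl.mpr hv
        by_contra hcon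
        exact h (Finset.mem_filter.mpr ⟨hvnonS, hcon⟩)
  · intro u v huv
    have hpne : p u ≠ p v := (hadj u v).mp huv
    have hne : u ≠ v := fun h => hpne (by rw [h])
    by_cases hu : u ∈ B <;> by_cases hv : v ∈ B
    · simp only [dif_pos hu, dif_pos hv]
      intro h
      have := hFinj h
      exact hne (congrArg Subtype.val this)
    · simp only [dif_pos hu, dif_neg hv]
      intro h
      have h1 : Frep ⟨u, hu⟩ ∉ Cfin := (Finset.mem_sdiff.mp (hFmem ⟨u, hu⟩)).2
      exact h1 (h ▸ hcolC (π (p v)))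
    · simp only [dif_neg hu, dif_pos hv]
      intro h
      have h1 : Frep ⟨v, hv⟩ ∉ Cfin := (Finset.mem_sdiff.mp (hFmem ⟨v, hv⟩)).2
      exact h1 (h ▸ hcolC (π (p u)))
    · simp only [dif_neg hu, dif_neg hv]
      intro h
      exact hpne (π.injective (hcolinj h))
end
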